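/- arXiv:2401.01728 — 2 statements merged into one kernel-verified Lean document; each statement's English description precedes it below -/
import Mathlib

section
/- Let f, f₁, …, f_C : ℝⁿ → ℝ be differentiable with f = (1/C)∑ᵢ fᵢ, each ∇fᵢ L-Lipschitz, and suppose (1/C)∑_{i=1}^C ‖∇fᵢ(x) − ∇f(x)‖² ≤ s² for all x. Then for any points y, x₁, …, x_C ∈ ℝⁿ with δ := (1/C)∑_{i=1}^C ‖xᵢ − y‖², we have (1/C)∑_{i=1}^C ‖∇fᵢ(xᵢ)‖² ≤ 12L²δ + 8s² + 2‖(1/C)∑_{j=1}^C ∇f_j(x_j)‖². -/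
/-!
The mean `m` of vectors `v i` minimises the average squared distance to a point, and the average
squared norm splits as `avg ‖v i - m‖² + ‖m‖²`; hence `avg ‖v i‖² ≤ avg ‖v i - c‖² + ‖m‖²` for
every `c`. Taking `v i = ∇fᵢ(xᵢ)` and `c = ∇f(y)`, each `‖∇fᵢ(xᵢ) - ∇f(y)‖²` is at most
`2 L² ‖xᵢ - y‖² + 2 ‖∇fᵢ(y) - ∇f(y)‖²`, which averages to `2 L² δ + 2 s²`.
-/

open Finset

section Mean

variable {ι E : Type*} [NormedAddCommGroup E] [InnerProductSpace ℝ E]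

theorem Finset.sum_norm_sub_sq_eq_sum_norm_sub_mean_sq (s : Finset ι) (v : ι → E) (c : E) :
    ∑ i ∈ s, ‖v i - c‖ ^ 2 =
      ∑ i ∈ s, ‖v i - (#s : ℝ)⁻¹ • ∑ j ∈ s, v j‖ ^ 2
        + #s * ‖(#s : ℝ)⁻¹ • ∑ j ∈ s, v j - c‖ ^ 2 := by
  rcases s.eq_empty_or_nonempty with rfl | hs
  · simp
  set m := (#s : ℝ)⁻¹ • ∑ j ∈ s, v j
  have hm : ∑ i ∈ s, (v i - m) = 0 := by
    rw [sum_sub_distrib, sum_const, ← Nat.cast_smul_eq_nsmul ℝ,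
      smul_inv_smul₀ (by simpa using hs.ne_empty), sub_self]
  calc ∑ i ∈ s, ‖v i - c‖ ^ 2 = ∑ i ∈ s, ‖(v i - m) + (m - c)‖ ^ 2 := by simp
    _ = ∑ i ∈ s, ‖v i - m‖ ^ 2 + 2 * inner ℝ (∑ i ∈ s, (v i - m)) (m - c)
          + #s * ‖m - c‖ ^ 2 := by
      simp only [norm_add_sq_real, sum_add_distrib, sum_inner, mul_sum, sum_const, nsmul_eq_mul]
    _ = _ := by rw [hm, inner_zero_left, mul_zero, add_zero]

theorem Finset.inv_card_mul_sum_norm_sq_le (s : Finset ι) (v : ι → E) (c : E) :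
    (#s : ℝ)⁻¹ * ∑ i ∈ s, ‖v i‖ ^ 2 ≤
      (#s : ℝ)⁻¹ * ∑ i ∈ s, ‖v i - c‖ ^ 2 + ‖(#s : ℝ)⁻¹ • ∑ i ∈ s, v i‖ ^ 2 := by
  rcases s.eq_empty_or_nonempty with rfl | hs
  · simp
  have hcard : (#s : ℝ) ≠ 0 := by simpa using hs.ne_empty
  have h0 := s.sum_norm_sub_sq_eq_sum_norm_sub_mean_sq v 0
  have hc := s.sum_norm_sub_sq_eq_sum_norm_sub_mean_sq v c
  simp only [sub_zero] at h0
  rw [h0, hc, mul_add, mul_add, inv_mul_cancel_left₀ hcard, inv_mul_cancel_left₀ hcard]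
  linarith [sq_nonneg ‖(#s : ℝ)⁻¹ • ∑ j ∈ s, v j - c‖]

end Mean

theorem norm_sub_sq_le_two_mul_add {E : Type*} [SeminormedAddCommGroup E] (a b c : E) :
    ‖a - c‖ ^ 2 ≤ 2 * ‖a - b‖ ^ 2 + 2 * ‖b - c‖ ^ 2 := by
  calc ‖a - c‖ ^ 2 ≤ (‖a - b‖ + ‖b - c‖) ^ 2 :=
        pow_le_pow_left₀ (norm_nonneg _) (norm_sub_le_norm_sub_add_norm_sub a b c) 2
    _ ≤ _ := by linarith [add_sq_le (a := ‖a - b‖) (b := ‖b - c‖)]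

theorem lemma_one_general {n C : ℕ} (L s : ℝ)
    (g : Fin C → EuclideanSpace ℝ (Fin n) → EuclideanSpace ℝ (Fin n))
    (gf : EuclideanSpace ℝ (Fin n) → EuclideanSpace ℝ (Fin n))
    (hLip : ∀ i u v, ‖g i u - g i v‖ ≤ L * ‖u - v‖)
    (hs : ∀ x, (1 / (C : ℝ)) * ∑ i, ‖g i x - gf x‖ ^ 2 ≤ s ^ 2)
    (y : EuclideanSpace ℝ (Fin n)) (x : Fin C → EuclideanSpace ℝ (Fin n)) :
    (1 / (C : ℝ)) * ∑ i, ‖g i (x i)‖ ^ 2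
      ≤ 12 * L ^ 2 * ((1 / (C : ℝ)) * ∑ i, ‖x i - y‖ ^ 2) + 8 * s ^ 2
        + 2 * ‖(1 / (C : ℝ)) • ∑ j, g j (x j)‖ ^ 2 := by
  have hpoint (i : Fin C) : ‖g i (x i) - gf y‖ ^ 2
      ≤ 2 * L ^ 2 * ‖x i - y‖ ^ 2 + 2 * ‖g i y - gf y‖ ^ 2 := by
    have hlip : ‖g i (x i) - g i y‖ ^ 2 ≤ L ^ 2 * ‖x i - y‖ ^ 2 := by
      rw [← mul_pow]; exact pow_le_pow_left₀ (norm_nonneg _) (hLip i (x i) y) 2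
    linarith [norm_sub_sq_le_two_mul_add (g i (x i)) (g i y) (gf y)]
  have hspread : (1 / (C : ℝ)) * ∑ i, ‖g i (x i) - gf y‖ ^ 2
      ≤ 2 * L ^ 2 * ((1 / (C : ℝ)) * ∑ i, ‖x i - y‖ ^ 2) + 2 * s ^ 2 := by
    calc (1 / (C : ℝ)) * ∑ i, ‖g i (x i) - gf y‖ ^ 2
        ≤ (1 / (C : ℝ)) * ∑ i, (2 * L ^ 2 * ‖x i - y‖ ^ 2 + 2 * ‖g i y - gf y‖ ^ 2) := by
          gcongr with i; exact hpoint i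
      _ = 2 * L ^ 2 * ((1 / (C : ℝ)) * ∑ i, ‖x i - y‖ ^ 2)
            + 2 * ((1 / (C : ℝ)) * ∑ i, ‖g i y - gf y‖ ^ 2) := by
          rw [sum_add_distrib, ← mul_sum, ← mul_sum]; ring
      _ ≤ _ := by linarith [hs y]
  have hmean := (univ : Finset (Fin C)).inv_card_mul_sum_norm_sq_le (fun i => g i (x i)) (gf y)
  rw [card_univ, Fintype.card_fin, ← one_div] at hmean
  have hδ : 0 ≤ (1 / (C : ℝ)) * ∑ i, ‖x i - y‖ ^ 2 := by positivity
  linarith [mul_nonneg (sq_nonneg L) hδ, sq_nonneg s, sq_nonneg ‖(1 / (C : ℝ)) • ∑ j, g j (x j)‖]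

theorem lemma_one {n C : ℕ} (hC : 0 < C) (L s : ℝ) (hL : 0 ≤ L)
    (f : Fin C → EuclideanSpace ℝ (Fin n) → ℝ)
    (g : Fin C → EuclideanSpace ℝ (Fin n) → EuclideanSpace ℝ (Fin n))
    (gf : EuclideanSpace ℝ (Fin n) → EuclideanSpace ℝ (Fin n))
    (hgrad : ∀ i x, HasGradientAt (f i) (g i x) x)
    (hf : ∀ x, HasGradientAt (fun z => (1 / (C : ℝ)) * ∑ i, f i z) (gf x) x)
    (hLip : ∀ i u v, ‖g i u - g i v‖ ≤ L * ‖u - v‖)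
    (hs : ∀ x, (1 / (C : ℝ)) * ∑ i, ‖g i x - gf x‖ ^ 2 ≤ s ^ 2)
    (y : EuclideanSpace ℝ (Fin n)) (x : Fin C → EuclideanSpace ℝ (Fin n)) :
    (1 / (C : ℝ)) * ∑ i, ‖g i (x i)‖ ^ 2
      ≤ 12 * L ^ 2 * ((1 / (C : ℝ)) * ∑ i, ‖x i - y‖ ^ 2) + 8 * s ^ 2
        + 2 * ‖(1 / (C : ℝ)) • ∑ j, g j (x j)‖ ^ 2 :=
  lemma_one_general L s g gf hLip hs y x
end

section
/- Let f₁, …, f_C : ℝⁿ → ℝ be differentiable with f = (1/C)∑ᵢ fᵢ and (1/C)∑_{i=1}^C ‖∇fᵢ(x) − ∇f(x)‖² ≤ s² for all x, and each ∇fᵢ L-Lipschitz. Then for any points x₁,…,x_C and y ∈ ℝⁿ, (1/C)∑_{i=1}^C ‖∇fᵢ(xᵢ) − (1/C)∑_{j=1}^C ∇f_j(x_j)‖² ≤ 12L²·δ + 8s², where δ = (1/C)∑_{i=1}^C ‖xᵢ − y‖². -/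
set_option maxHeartbeats 1000000


theorem gradient_dispersion_bound {n C : ℕ} (hC : 0 < C) (L s : ℝ) (hL : 0 ≤ L)
    (f : Fin C → EuclideanSpace ℝ (Fin n) → ℝ)
    (g : Fin C → EuclideanSpace ℝ (Fin n) → EuclideanSpace ℝ (Fin n))
    (gf : EuclideanSpace ℝ (Fin n) → EuclideanSpace ℝ (Fin n))
    (hgrad : ∀ i x, HasGradientAt (f i) (g i x) x)
    (hf : ∀ x, HasGradientAt (fun z => (1 / (C : ℝ)) * ∑ i, f i z) (gf x) x)
    (hLip : ∀ i u v, ‖g i u - g i v‖ ≤ L * ‖u - v‖)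
    (hs : ∀ x, (1 / (C : ℝ)) * ∑ i, ‖g i x - gf x‖ ^ 2 ≤ s ^ 2)
    (y : EuclideanSpace ℝ (Fin n)) (x : Fin C → EuclideanSpace ℝ (Fin n)) :
    (1 / (C : ℝ)) * ∑ i, ‖g i (x i) - (1 / (C : ℝ)) • ∑ j, g j (x j)‖ ^ 2
      ≤ 12 * L ^ 2 * ((1 / (C : ℝ)) * ∑ i, ‖x i - y‖ ^ 2) + 8 * s ^ 2 := by
  have hCpos : (0:ℝ) < C := Nat.cast_pos.mpr hC
  set b := gf y with hb
  set a : Fin C → EuclideanSpace ℝ (Fin n) := fun i => g i (x i) with ha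
  set m : EuclideanSpace ℝ (Fin n) := (1 / (C:ℝ)) • ∑ j, a j with hm
  -- key1 : per-term bound via Lipschitzness
  have key1 : ∀ i, ‖a i - b‖ ^ 2 ≤ 2 * L^2 * ‖x i - y‖^2 + 2 * ‖g i y - b‖^2 := by
    intro i
    have hdec : a i - b = (g i (x i) - g i y) + (g i y - b) := by simp only [ha]; abel
    have h1 : ‖a i - b‖ ≤ L * ‖x i - y‖ + ‖g i y - b‖ := by
      rw [hdec]
      exact (norm_add_le _ _).trans (add_le_add (hLip i (x i) y) le_rfl)
    have h2 : 0 ≤ ‖a i - b‖ := norm_nonneg _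
    have h3 : 0 ≤ L * ‖x i - y‖ := mul_nonneg hL (norm_nonneg _)
    have h4 : 0 ≤ ‖g i y - b‖ := norm_nonneg _
    nlinarith [sq_nonneg (L * ‖x i - y‖ - ‖g i y - b‖)]
  -- key2 : Jensen for the mean
  have hmb : m - b = (1 / (C:ℝ)) • ∑ j, (a j - b) := by
    rw [Finset.sum_sub_distrib, smul_sub, hm]
    congr 1
    rw [Finset.sum_const, Finset.card_univ, Fintype.card_fin]
    rw [← Nat.cast_smul_eq_nsmul ℝ, smul_smul]
    rw [one_div, inv_mul_cancel₀ (ne_of_gt hCpos), one_smul]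
  have key2 : ‖m - b‖ ^ 2 ≤ (1 / (C:ℝ)) * ∑ j, ‖a j - b‖ ^ 2 := by
    have h1 : ‖m - b‖ = (1 / (C:ℝ)) * ‖∑ j, (a j - b)‖ := by
      rw [hmb, norm_smul, Real.norm_eq_abs, abs_of_pos (by positivity)]
    have h2 : ‖∑ j, (a j - b)‖ ≤ ∑ j, ‖a j - b‖ := norm_sum_le _ _
    have h3 : (∑ j, ‖a j - b‖) ^ 2 ≤ (C:ℝ) * ∑ j, ‖a j - b‖ ^ 2 := by
      have := sq_sum_le_card_mul_sum_sq (s := Finset.univ)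
        (f := fun j => ‖a j - b‖)
      simpa [Finset.card_univ] using this
    have h4 : ‖∑ j, (a j - b)‖ ^ 2 ≤ (C:ℝ) * ∑ j, ‖a j - b‖ ^ 2 :=
      le_trans (pow_le_pow_left₀ (norm_nonneg _) h2 2) h3
    rw [h1, mul_pow]
    have : (1 / (C:ℝ))^2 * ‖∑ j, (a j - b)‖ ^ 2
        ≤ (1 / (C:ℝ))^2 * ((C:ℝ) * ∑ j, ‖a j - b‖ ^ 2) :=
      mul_le_mul_of_nonneg_left h4 (by positivity)
    calc (1 / (C:ℝ))^2 * ‖∑ j, (a j - b)‖ ^ 2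
        ≤ (1 / (C:ℝ))^2 * ((C:ℝ) * ∑ j, ‖a j - b‖ ^ 2) := this
      _ = (1 / (C:ℝ)) * ∑ j, ‖a j - b‖ ^ 2 := by
          field_simp
  -- key3 : per-term split
  have key3 : ∀ i, ‖a i - m‖ ^ 2 ≤ 2 * ‖a i - b‖^2 + 2 * ‖m - b‖^2 := by
    intro i
    have hdec : a i - m = (a i - b) + (b - m) := by abel
    have h1 : ‖a i - m‖ ≤ ‖a i - b‖ + ‖m - b‖ := by
      rw [hdec]
      exact (norm_add_le _ _).trans (by rw [norm_sub_rev b m])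
    nlinarith [sq_nonneg (‖a i - b‖ - ‖m - b‖), norm_nonneg (a i - m),
      norm_nonneg (a i - b), norm_nonneg (m - b)]
  -- assemble sums
  have S1le : ∑ i, ‖a i - m‖ ^ 2 ≤ 4 * ∑ i, ‖a i - b‖ ^ 2 := by
    have h1 : ∑ i, ‖a i - m‖ ^ 2 ≤ ∑ i : Fin C, (2 * ‖a i - b‖^2 + 2 * ‖m - b‖^2) :=
      Finset.sum_le_sum fun i _ => key3 i
    have h2 : ∑ i : Fin C, (2 * ‖a i - b‖^2 + 2 * ‖m - b‖^2)
        = 2 * ∑ i, ‖a i - b‖^2 + (C:ℝ) * (2 * ‖m - b‖^2) := by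
      rw [Finset.sum_add_distrib, Finset.sum_const, Finset.card_univ, Fintype.card_fin,
        ← Finset.mul_sum, nsmul_eq_mul]
    have h3 : (C:ℝ) * (2 * ‖m - b‖^2) ≤ 2 * ∑ i, ‖a i - b‖^2 := by
      have := mul_le_mul_of_nonneg_left key2 (le_of_lt hCpos)
      calc (C:ℝ) * (2 * ‖m - b‖^2) = 2 * ((C:ℝ) * ‖m - b‖^2) := by ring
        _ ≤ 2 * ((C:ℝ) * ((1 / (C:ℝ)) * ∑ j, ‖a j - b‖ ^ 2)) := by linarith
        _ = 2 * ∑ j, ‖a j - b‖^2 := by field_simp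
    linarith
  have S2le : ∑ i, ‖a i - b‖ ^ 2
      ≤ 2 * L^2 * ∑ i, ‖x i - y‖^2 + 2 * ∑ i, ‖g i y - b‖^2 := by
    have h1 : ∑ i, ‖a i - b‖ ^ 2
        ≤ ∑ i : Fin C, (2 * L^2 * ‖x i - y‖^2 + 2 * ‖g i y - b‖^2) :=
      Finset.sum_le_sum fun i _ => key1 i
    rw [Finset.sum_add_distrib, ← Finset.mul_sum, ← Finset.mul_sum] at h1
    exact h1
  have hsy : (1 / (C : ℝ)) * ∑ i, ‖g i y - b‖ ^ 2 ≤ s ^ 2 := hs y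
  have hδ : 0 ≤ (1 / (C : ℝ)) * ∑ i, ‖x i - y‖ ^ 2 := by positivity
  have hL2 : 0 ≤ L^2 := sq_nonneg L
  have hCinv : 0 < 1 / (C:ℝ) := by positivity
  have final : (1 / (C:ℝ)) * ∑ i, ‖a i - m‖ ^ 2
      ≤ 8 * L^2 * ((1 / (C:ℝ)) * ∑ i, ‖x i - y‖^2)
        + 8 * ((1 / (C:ℝ)) * ∑ i, ‖g i y - b‖^2) := by
    have h1 := mul_le_mul_of_nonneg_left S1le (le_of_lt hCinv)
    have h2 := mul_le_mul_of_nonneg_left S2le (le_of_lt hCinv)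
    have e1 : (1 / (C:ℝ)) * (4 * ∑ i, ‖a i - b‖ ^ 2)
        = 4 * ((1 / (C:ℝ)) * ∑ i, ‖a i - b‖ ^ 2) := by ring
    have e2 : (1 / (C:ℝ)) * (2 * L^2 * ∑ i, ‖x i - y‖^2 + 2 * ∑ i, ‖g i y - b‖^2)
        = 2 * (L^2 * ((1 / (C:ℝ)) * ∑ i, ‖x i - y‖^2))
          + 2 * ((1 / (C:ℝ)) * ∑ i, ‖g i y - b‖^2) := by ring
    have e3 : 8 * L^2 * ((1 / (C:ℝ)) * ∑ i, ‖x i - y‖^2)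
        = 8 * (L^2 * ((1 / (C:ℝ)) * ∑ i, ‖x i - y‖^2)) := by ring
    rw [e1] at h1; rw [e2] at h2; rw [e3]
    linarith
  have : 8 * L^2 * ((1 / (C:ℝ)) * ∑ i, ‖x i - y‖^2)
      ≤ 12 * L^2 * ((1 / (C:ℝ)) * ∑ i, ‖x i - y‖^2) := by
    linarith [mul_nonneg hL2 hδ]
  calc (1 / (C:ℝ)) * ∑ i, ‖a i - m‖ ^ 2
      ≤ 8 * L^2 * ((1 / (C:ℝ)) * ∑ i, ‖x i - y‖^2)
        + 8 * ((1 / (C:ℝ)) * ∑ i, ‖g i y - b‖^2) := final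
    _ ≤ 12 * L ^ 2 * ((1 / (C : ℝ)) * ∑ i, ‖x i - y‖ ^ 2) + 8 * s ^ 2 := by linarith [mul_nonneg hL2 hδ]
end
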